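/- Geometric convergence of a strictly positive stochastic matrix: if P is a stochastic matrix on a finite set S with δ := min_{x,x'} P(x'|x) > 0 and stationary distribution π, then for all t ≥ 1 and all x ∈ S, the total variation distance satisfies ‖P^t(x,·) − π‖_TV ≤ (1 − |S|·δ)^t, where ‖μ − ν‖_TV = (1/2)∑_{y} |μ(y) − ν(y)|. -/
import Mathlib


/-- Geometric convergence of a strictly positive stochastic matrix: if every entry of
`P` is at least `δ > 0` and `π` is stationary, then the total variation distance of the
`t`-step transition probabilities from `π` is at most `(1 - |S|·δ)^t`.
Here `P x x'` denotes `P(x'|x)` and `Pt t x y` denotes `P^t(x, y)`. -/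
theorem positive_stochastic_geometric_convergence
    {S : Type*} [Fintype S] [Nonempty S]
    (P : S → S → ℝ) (δ : ℝ) (hδ : 0 < δ)
    (hPδ : ∀ x x', δ ≤ P x x') (hP1 : ∀ x, ∑ x', P x x' = 1)
    (hδcard : (Fintype.card S : ℝ) * δ ≤ 1)
    (π : S → ℝ) (hπ0 : ∀ x, 0 ≤ π x) (hπ1 : ∑ x, π x = 1)
    (hstat : ∀ x, ∑ x', π x' * P x' x = π x)
    (Pt : ℕ → S → S → ℝ)
    (hPt1 : ∀ x y, Pt 1 x y = P x y)
    (hPtsucc : ∀ t x y, Pt (t + 1) x y = ∑ z, Pt t x z * P z y) :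
    ∀ t : ℕ, 1 ≤ t → ∀ x : S,
      (1 / 2) * ∑ y, |Pt t x y - π y| ≤ (1 - (Fintype.card S : ℝ) * δ) ^ t := by
  set c : ℝ := 1 - (Fintype.card S : ℝ) * δ with hc_def
  have hc : 0 ≤ c := by simp [hc_def]; linarith
  have hπδ : ∀ y, δ ≤ π y := by
    intro y
    calc δ = ∑ x', π x' * δ := by rw [← Finset.sum_mul, hπ1, one_mul]
    _ ≤ ∑ x', π x' * P x' y :=
        Finset.sum_le_sum fun i _ => mul_le_mul_of_nonneg_left (hPδ i y) (hπ0 i)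
    _ = π y := hstat y
  have hcδ : ∀ x, ∑ y, (P x y - δ) = c := by
    intro x
    rw [Finset.sum_sub_distrib, hP1, Finset.sum_const, Finset.card_univ, hc_def]
    ring
  have hsum : ∀ t, 1 ≤ t → ∀ x, ∑ y, Pt t x y = 1 := by
    intro t
    induction t with
    | zero => omega
    | succ n ih =>
      intro ht x
      rcases Nat.lt_or_ge 1 (n + 1) with h | h
      · have hn : 1 ≤ n := by omega
        simp only [hPtsucc]
        rw [Finset.sum_comm]
        calc ∑ z, ∑ y, Pt n x z * P z y = ∑ z, Pt n x z * ∑ y, P z y := by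
              simp [Finset.mul_sum]
        _ = ∑ z, Pt n x z := by simp [hP1]
        _ = 1 := ih hn x
      · have : n = 0 := by omega
        subst this
        simp [hPt1, hP1]
  -- main claim without the 1/2 factor
  have main : ∀ t, 1 ≤ t → ∀ x, ∑ y, |Pt t x y - π y| ≤ 2 * c ^ t := by
    intro t
    induction t with
    | zero => omega
    | succ n ih =>
      intro ht x
      rcases Nat.lt_or_ge 1 (n + 1) with h | h
      · have hn : 1 ≤ n := by omega
        have hzero : ∑ z, (Pt n x z - π z) = 0 := by
          rw [Finset.sum_sub_distrib, hsum n hn x, hπ1]; ring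
        have key : ∀ y, Pt (n+1) x y - π y = ∑ z, (Pt n x z - π z) * (P z y - δ) := by
          intro y
          have : ∑ z, (Pt n x z - π z) * (P z y - δ)
              = (∑ z, Pt n x z * P z y) - (∑ z, π z * P z y)
                - δ * ∑ z, (Pt n x z - π z) := by
            rw [Finset.mul_sum, ← Finset.sum_sub_distrib, ← Finset.sum_sub_distrib]
            congr 1; ext z; ring
          rw [this, hzero, hstat, hPtsucc]
          ring
        calc ∑ y, |Pt (n+1) x y - π y|
            = ∑ y, |∑ z, (Pt n x z - π z) * (P z y - δ)| := by
              simp only [key]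
          _ ≤ ∑ y, ∑ z, |Pt n x z - π z| * (P z y - δ) := by
              apply Finset.sum_le_sum
              intro y _
              refine (Finset.abs_sum_le_sum_abs _ _).trans ?_
              apply Finset.sum_le_sum
              intro z _
              rw [abs_mul, abs_of_nonneg (sub_nonneg.mpr (hPδ z y))]
          _ = ∑ z, |Pt n x z - π z| * ∑ y, (P z y - δ) := by
              rw [Finset.sum_comm]
              exact Finset.sum_congr rfl fun z _ => (Finset.mul_sum _ _ _).symm
          _ = c * ∑ z, |Pt n x z - π z| := by
              simp only [hcδ]
              rw [Finset.mul_sum]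
              exact Finset.sum_congr rfl fun z _ => mul_comm _ _
          _ ≤ c * (2 * c ^ n) := by
              exact mul_le_mul_of_nonneg_left (ih hn x) hc
          _ = 2 * c ^ (n + 1) := by ring
      · have : n = 0 := by omega
        subst this
        calc ∑ y, |Pt 1 x y - π y| ≤ ∑ y, ((P x y - δ) + (π y - δ)) := by
              apply Finset.sum_le_sum
              intro y _
              rw [hPt1]
              have h1 := hPδ x y
              have h2 := hπδ y
              rw [abs_sub_le_iff]
              constructor <;> linarith
          _ = c + c := by
              rw [Finset.sum_add_distrib, hcδ]
              congr 1
              rw [Finset.sum_sub_distrib, hπ1, Finset.sum_const, Finset.card_univ, hc_def]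
              ring
          _ = 2 * c ^ 1 := by ring
  intro t ht x
  have := main t ht x
  linarith
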